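/- Markov-type bound for normalized-likelihood overestimation: Let (p_θ)_{θ ∈ Θ_{k₀}} and (q_θ)_{θ ∈ Θ_k} be two finite families of probability mass functions on a finite set X, let L₀(x) = sup_{θ ∈ Θ_{k₀}} p_θ(x) and L_k(x) = sup_{θ ∈ Θ_k} q_θ(x), define NML₀(x) = L₀(x)/∑_y L₀(y) and NML_k(x) = L_k(x)/∑_y L_k(y). If X is distributed according to some p_{θ*} with θ* ∈ Θ_{k₀} and ∑_y L₀(y) ≤ e^B, then for any Δ ∈ ℝ, P( NML₀(X) ≤ NML_k(X) e^Δ ) ≤ e^{B + Δ}. -/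
import Mathlib


open Finset
open scoped Classical

/-- Markov-type bound for normalized-likelihood overestimation: if `X ~ p_{θ*}` with
`θ* ∈ Θ₀`, the Shtarkov sum of the `Θ₀`-family is at most `e^B`, and `NML` denotes the
normalized maximum likelihood of each family, then
`P(NML₀(X) ≤ NML_k(X) e^Δ) ≤ e^{B+Δ}`. -/
theorem nml_overestimation_bound
    (X : Type*) [Fintype X]
    (Θ₀ Θk : Type*) [Fintype Θ₀] [Fintype Θk] [Nonempty Θ₀] [Nonempty Θk]
    (p : Θ₀ → X → ℝ) (q : Θk → X → ℝ)
    (hp : ∀ θ, (∀ x, 0 ≤ p θ x) ∧ ∑ x, p θ x = 1)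
    (hq : ∀ θ, (∀ x, 0 ≤ q θ x) ∧ ∑ x, q θ x = 1)
    (θstar : Θ₀) (B Δ : ℝ)
    (hB : ∑ y, (⨆ θ, p θ y) ≤ Real.exp B) :
    (∑ x : X,
      if (⨆ θ, p θ x) / (∑ y, ⨆ θ, p θ y) ≤
          (⨆ θ, q θ x) / (∑ y, ⨆ θ, q θ y) * Real.exp Δ
        then p θstar x else 0) ≤ Real.exp (B + Δ) := by
  classical
  obtain ⟨θ0⟩ := ‹Nonempty Θk›
  set S0 := ∑ y, ⨆ θ, p θ y with hS0
  set Sk := ∑ y, ⨆ θ, q θ y with hSk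
  have hsupq : ∀ x, q θ0 x ≤ ⨆ θ, q θ x := fun x =>
    le_ciSup (f := fun θ => q θ x) (Set.Finite.bddAbove (Set.finite_range _)) θ0
  have hsupp : ∀ x, p θstar x ≤ ⨆ θ, p θ x := fun x =>
    le_ciSup (f := fun θ => p θ x) (Set.Finite.bddAbove (Set.finite_range _)) θstar
  have hqnn : ∀ x, 0 ≤ ⨆ θ, q θ x := fun x => le_trans ((hq θ0).1 x) (hsupq x)
  have hSk1 : (1:ℝ) ≤ Sk := by
    rw [← (hq θ0).2]; exact Finset.sum_le_sum fun x _ => hsupq x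
  have hSkpos : 0 < Sk := lt_of_lt_of_le one_pos hSk1
  have hS01 : (1:ℝ) ≤ S0 := by
    rw [← (hp θstar).2]; exact Finset.sum_le_sum fun x _ => hsupp x
  have hS0pos : 0 < S0 := lt_of_lt_of_le one_pos hS01
  have key : ∀ x : X,
      (if (⨆ θ, p θ x) / S0 ≤ (⨆ θ, q θ x) / Sk * Real.exp Δ
        then p θstar x else 0) ≤ Real.exp (B + Δ) * ((⨆ θ, q θ x) / Sk) := by
    intro x
    split_ifs with h
    · have h1 : p θstar x ≤ ((⨆ θ, q θ x) / Sk * Real.exp Δ) * S0 := by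
        have h2 : (⨆ θ, p θ x) = ((⨆ θ, p θ x) / S0) * S0 := by
          field_simp
        calc p θstar x ≤ ⨆ θ, p θ x := hsupp x
          _ = ((⨆ θ, p θ x) / S0) * S0 := h2
          _ ≤ ((⨆ θ, q θ x) / Sk * Real.exp Δ) * S0 :=
            mul_le_mul_of_nonneg_right h hS0pos.le
      have hnn : 0 ≤ (⨆ θ, q θ x) / Sk * Real.exp Δ :=
        mul_nonneg (div_nonneg (hqnn x) hSkpos.le) (Real.exp_pos Δ).le
      calc p θstar x ≤ ((⨆ θ, q θ x) / Sk * Real.exp Δ) * S0 := h1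
        _ ≤ ((⨆ θ, q θ x) / Sk * Real.exp Δ) * Real.exp B :=
          mul_le_mul_of_nonneg_left hB hnn
        _ = Real.exp (B + Δ) * ((⨆ θ, q θ x) / Sk) := by
          rw [Real.exp_add]; ring
    · exact mul_nonneg (Real.exp_pos _).le (div_nonneg (hqnn x) hSkpos.le)
  calc (∑ x : X, if (⨆ θ, p θ x) / S0 ≤ (⨆ θ, q θ x) / Sk * Real.exp Δ
        then p θstar x else 0)
      ≤ ∑ x : X, Real.exp (B + Δ) * ((⨆ θ, q θ x) / Sk) :=
        Finset.sum_le_sum fun x _ => key x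
    _ = Real.exp (B + Δ) * (Sk / Sk) := by
        rw [← Finset.mul_sum, ← Finset.sum_div]
    _ = Real.exp (B + Δ) := by rw [div_self hSkpos.ne', mul_one]
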